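/- Under the hypotheses of the ridgeline construction with K components, if w ∈ W = {w : w'S_α d_j = 0 ∀j}, then the mixture density g(x) restricted to the line {x(α) + δw : δ ∈ ℝ} attains its maximum at δ = 0. -/

import Mathlib

open Matrix

noncomputable def gauss (D : ℕ) (μ : Fin D → ℝ) (S : Matrix (Fin D) (Fin D) ℝ)
    (x : Fin D → ℝ) : ℝ :=
  (Real.sqrt ((2 * Real.pi) ^ D * S.det))⁻¹ *
    Real.exp (-((x - μ) ⬝ᵥ (S⁻¹ *ᵥ (x - μ))) / 2)

/-!
At the ridgeline point `x = x(α)` the vectors `v_j = Σ_j⁻¹ (x - μ_j)` satisfy `Σ α_j v_j = 0`.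
The condition `w ∈ W` says that `w ⬝ᵥ v_j` does not depend on `j`, so that common value is
`w ⬝ᵥ Σ α_j v_j = 0`. Hence `w` is `Σ_j⁻¹`-orthogonal to `x - μ_j` for every `j`, and along the
line `x + δ w` each Mahalanobis distance `(x - μ_j) ⬝ᵥ Σ_j⁻¹ (x - μ_j)` only grows by
`δ² w ⬝ᵥ Σ_j⁻¹ w ≥ 0`: every component density, hence the mixture, is largest at `δ = 0`.
-/

section

variable {n R : Type*} [Fintype n]

lemma Matrix.PosSemidef.dotProduct_mulVec_le_add_smul {A : Matrix n n ℝ} (hA : A.PosSemidef)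
    {u w : n → ℝ} (huw : w ⬝ᵥ (A *ᵥ u) = 0) (δ : ℝ) :
    u ⬝ᵥ (A *ᵥ u) ≤ (u + δ • w) ⬝ᵥ (A *ᵥ (u + δ • w)) := by
  have hwu : u ⬝ᵥ (A *ᵥ w) = 0 := by
    rw [dotProduct_mulVec, ← mulVec_transpose, ← conjTranspose_eq_transpose_of_trivial,
      hA.isHermitian.eq, dotProduct_comm, huw]
  have hww : 0 ≤ w ⬝ᵥ (A *ᵥ w) := by simpa using hA.dotProduct_mulVec_nonneg w
  have hexpand : (u + δ • w) ⬝ᵥ (A *ᵥ (u + δ • w)) =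
      u ⬝ᵥ (A *ᵥ u) + δ ^ 2 * (w ⬝ᵥ (A *ᵥ w)) := by
    simp only [mulVec_add, mulVec_smul, dotProduct_add, add_dotProduct, dotProduct_smul,
      smul_dotProduct, smul_eq_mul, huw, hwu]
    ring
  rw [hexpand]
  nlinarith [sq_nonneg δ]

lemma sum_smul_mulVec_sub_eq_zero [CommRing R] {ι : Type*} [Fintype ι] {α : ι → R}
    {A : ι → Matrix n n R} {μ : ι → n → R} {x : n → R}
    (hx : (∑ j, α j • A j) *ᵥ x = ∑ j, α j • (A j *ᵥ μ j)) :
    ∑ j, α j • (A j *ᵥ (x - μ j)) = 0 := by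
  simp only [mulVec_sub, smul_sub, Finset.sum_sub_distrib, ← smul_mulVec, ← sum_mulVec]
  rw [hx]
  simp only [smul_mulVec, sub_self]

lemma dotProduct_eq_zero_of_sum_smul_eq_zero [CommRing R] {ι : Type*} [Fintype ι]
    {α : ι → R} (hα : ∑ j, α j = 1) {v : ι → n → R} (hv : ∑ j, α j • v j = 0)
    {w : n → R} {j₀ : ι} (hw : ∀ j, w ⬝ᵥ v j = w ⬝ᵥ v j₀) (j : ι) : w ⬝ᵥ v j = 0 := by
  have hj₀ : w ⬝ᵥ v j₀ = 0 := by
    calc w ⬝ᵥ v j₀ = ∑ j, α j * w ⬝ᵥ v j := by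
          simp only [hw, ← Finset.sum_mul, hα, one_mul]
      _ = w ⬝ᵥ ∑ j, α j • v j := by simp only [dotProduct_sum, dotProduct_smul, smul_eq_mul]
      _ = 0 := by rw [hv, dotProduct_zero]
  rw [hw, hj₀]

end

lemma gauss_add_smul_le {D : ℕ} {μ : Fin D → ℝ} {S : Matrix (Fin D) (Fin D) ℝ} (hS : S.PosDef)
    {x w : Fin D → ℝ} (hw : w ⬝ᵥ (S⁻¹ *ᵥ (x - μ)) = 0) (δ : ℝ) :
    gauss D μ S (x + δ • w) ≤ gauss D μ S x := by
  unfold gauss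
  gcongr
  rw [show x + δ • w - μ = x - μ + δ • w by abel]
  exact hS.inv.posSemidef.dotProduct_mulVec_le_add_smul hw δ

theorem mixture_max_on_ridgeline_orthogonal_line_general
    (D K : ℕ)
    (π' : Fin (K + 1) → ℝ) (hπ : ∀ j, 0 < π' j)
    (μ : Fin (K + 1) → (Fin D → ℝ)) (Sg : Fin (K + 1) → Matrix (Fin D) (Fin D) ℝ)
    (hSg : ∀ j, (Sg j).PosDef)
    (α : Fin (K + 1) → ℝ) (hα : ∀ j, 0 < α j) (hαsum : ∑ j, α j = 1)
    (Sα : Matrix (Fin D) (Fin D) ℝ) (hSα : Sα = ∑ j, α j • (Sg j)⁻¹)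
    (x : Fin D → ℝ) (hx : x = Sα⁻¹ *ᵥ (∑ j, α j • ((Sg j)⁻¹ *ᵥ μ j)))
    (v : Fin (K + 1) → (Fin D → ℝ)) (hv : ∀ j, v j = (Sg j)⁻¹ *ᵥ (x - μ j))
    (d : Fin K → (Fin D → ℝ))
    (hd : ∀ j : Fin K, d j = Sα⁻¹ *ᵥ (v j.castSucc - v (Fin.last K)))
    (w : Fin D → ℝ) (hw : ∀ j : Fin K, w ⬝ᵥ (Sα *ᵥ d j) = 0) :
    ∀ δ : ℝ,
      (∑ j, π' j * gauss D (μ j) (Sg j) (x + δ • w)) ≤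
        ∑ j, π' j * gauss D (μ j) (Sg j) x := by
  intro δ
  have hSαdet : IsUnit Sα.det := by
    refine (PosDef.det_pos ?_).ne'.isUnit
    rw [hSα]
    exact posDef_sum Finset.univ_nonempty fun j _ => (hSg j).inv.smul (hα j)
  have hcancel (z : Fin D → ℝ) : Sα *ᵥ (Sα⁻¹ *ᵥ z) = z := by
    rw [mulVec_mulVec, mul_nonsing_inv _ hSαdet, one_mulVec]
  have hv_sum : ∑ j, α j • v j = 0 := by
    simp only [hv]
    refine sum_smul_mulVec_sub_eq_zero ?_
    rw [← hSα, hx, hcancel]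
  have hw_const (j : Fin (K + 1)) : w ⬝ᵥ v j = w ⬝ᵥ v (Fin.last K) := by
    refine Fin.lastCases rfl (fun i => ?_) j
    have := hw i
    rwa [hd i, hcancel, dotProduct_sub, sub_eq_zero] at this
  gcongr with j
  · exact (hπ j).le
  · refine gauss_add_smul_le (hSg j) ?_ δ
    rw [← hv j]
    exact dotProduct_eq_zero_of_sum_smul_eq_zero hαsum hv_sum hw_const j

/-- Theorem 2: if `w ∈ W`, then along the line `x(α) + δ w` the mixture density
attains its maximum at `δ = 0`. -/
theorem mixture_max_on_ridgeline_orthogonal_line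
    (D K : ℕ)
    (π' : Fin (K + 1) → ℝ) (hπ : ∀ j, 0 < π' j) (hπsum : ∑ j, π' j = 1)
    (μ : Fin (K + 1) → (Fin D → ℝ)) (Sg : Fin (K + 1) → Matrix (Fin D) (Fin D) ℝ)
    (hSg : ∀ j, (Sg j).PosDef)
    (α : Fin (K + 1) → ℝ) (hα : ∀ j, 0 < α j) (hαsum : ∑ j, α j = 1)
    (Sα : Matrix (Fin D) (Fin D) ℝ) (hSα : Sα = ∑ j, α j • (Sg j)⁻¹)
    (x : Fin D → ℝ) (hx : x = Sα⁻¹ *ᵥ (∑ j, α j • ((Sg j)⁻¹ *ᵥ μ j)))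
    (v : Fin (K + 1) → (Fin D → ℝ)) (hv : ∀ j, v j = (Sg j)⁻¹ *ᵥ (x - μ j))
    (d : Fin K → (Fin D → ℝ))
    (hd : ∀ j : Fin K, d j = Sα⁻¹ *ᵥ (v j.castSucc - v (Fin.last K)))
    (w : Fin D → ℝ) (hw : ∀ j : Fin K, w ⬝ᵥ (Sα *ᵥ d j) = 0) :
    ∀ δ : ℝ,
      (∑ j, π' j * gauss D (μ j) (Sg j) (x + δ • w)) ≤
        ∑ j, π' j * gauss D (μ j) (Sg j) x :=
  mixture_max_on_ridgeline_orthogonal_line_general D K π' hπ μ Sg hSg α hα hαsum Sα hSα x hx v hv d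
    hd w hw
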